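/- Let δ be a smooth symmetric diagonal with inverse δ⁻¹ and α(u) = ∫₀ᵘ δ(t) dt. Then ∫₀¹ δ⁻¹(u) du = 1 − α(1) and ∫₀¹ (δ⁻¹(u))² du = 5/6 − α(1). -/

import Mathlib

open MeasureTheory Set

noncomputable section

/-- A smooth symmetric diagonal `δ` with (continuous) derivative `δ'`:
continuous, strictly increasing, 2-Lipschitz, `δ(0)=0`, `δ(1)=1`, `δ(t) ≤ t`,
satisfying the symmetry identity `δ(u) = 2u - 1 + δ(1-u)`, differentiable with
continuous derivative, and `0 < δ'(u) < 2` for all but finitely many `u`. -/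
def SmoothSymDiagonal (δ δ' : ℝ → ℝ) : Prop :=
  ContinuousOn δ (Icc 0 1) ∧
  StrictMonoOn δ (Icc 0 1) ∧
  (∀ u ∈ Icc (0:ℝ) 1, ∀ v ∈ Icc (0:ℝ) 1, |δ u - δ v| ≤ 2 * |u - v|) ∧
  δ 0 = 0 ∧ δ 1 = 1 ∧
  (∀ t ∈ Icc (0:ℝ) 1, δ t ∈ Icc (0:ℝ) 1 ∧ δ t ≤ t) ∧
  (∀ u ∈ Icc (0:ℝ) 1, δ u = 2 * u - 1 + δ (1 - u)) ∧
  (∀ u ∈ Icc (0:ℝ) 1, HasDerivWithinAt δ (δ' u) (Icc 0 1) u) ∧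
  ContinuousOn δ' (Icc 0 1) ∧
  {u ∈ Icc (0:ℝ) 1 | ¬(0 < δ' u ∧ δ' u < 2)}.Finite

/-- `finv` is the inverse of the bijection `f : [0,1] → [0,1]`. -/
def InverseOnUnitInterval (f finv : ℝ → ℝ) : Prop :=
  (∀ t ∈ Icc (0:ℝ) 1, finv t ∈ Icc (0:ℝ) 1) ∧
  (∀ t ∈ Icc (0:ℝ) 1, f (finv t) = t) ∧
  (∀ t ∈ Icc (0:ℝ) 1, finv (f t) = t)

/-
Substituting `u = δ x` and integrating by parts gives, for any differentiable weight `φ`,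
`∫₀¹ φ(δ⁻¹ u) du = ∫₀¹ φ δ' = φ(1) − ∫₀¹ φ' δ`.
With `φ(x) = x` this is the first identity; with `φ(x) = x²` it reduces the second one to
`2 ∫₀¹ x δ(x) dx = α(1) + 1/6`, which follows from the symmetry `δ(x) = 2x − 1 + δ(1 − x)`
after reflecting `x ↦ 1 − x`.
-/

theorem integral_comp_leftInvOn_eq_sub_integral {f f' finv φ φ' : ℝ → ℝ} {a b : ℝ} (hab : a ≤ b)
    (hmono : MonotoneOn f (Icc a b)) (hf : ∀ x ∈ Icc a b, HasDerivWithinAt f (f' x) (Icc a b) x)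
    (hf' : IntervalIntegrable f' volume a b)
    (hφ : ∀ x ∈ Icc a b, HasDerivWithinAt φ (φ' x) (Icc a b) x)
    (hφ' : IntervalIntegrable φ' volume a b) (hinv : ∀ x ∈ Icc a b, finv (f x) = x) :
    ∫ u in f a..f b, φ (finv u) = φ b * f b - φ a * f a - ∫ x in a..b, φ' x * f x := by
  have himage : f '' Icc a b = Icc (f a) (f b) :=
    ContinuousOn.image_Icc_of_monotoneOn hab (fun x hx => (hf x hx).continuousWithinAt) hmono
  have hsubst : ∫ u in f a..f b, φ (finv u) = ∫ x in a..b, φ x * f' x := by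
    rw [intervalIntegral.integral_of_le (hmono ⟨le_rfl, hab⟩ ⟨hab, le_rfl⟩ hab),
      intervalIntegral.integral_of_le hab,
      ← integral_Icc_eq_integral_Ioc, ← integral_Icc_eq_integral_Ioc, ← himage,
      integral_image_eq_integral_deriv_smul_of_monotoneOn measurableSet_Icc hf hmono]
    refine setIntegral_congr_fun measurableSet_Icc fun x hx => ?_
    simp only [smul_eq_mul, hinv x hx, mul_comm]
  rw [hsubst]
  rw [← uIcc_of_le hab] at hf hφ
  exact intervalIntegral.integral_mul_deriv_eq_deriv_mul_of_hasDerivWithinAt hφ hf hφ' hf'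

theorem integral_id_mul_eq_of_symm {f : ℝ → ℝ} (hf : IntervalIntegrable f volume 0 1)
    (hsym : ∀ u ∈ Icc (0 : ℝ) 1, f u = 2 * u - 1 + f (1 - u)) :
    ∫ x in (0 : ℝ)..1, x * f x = (∫ x in (0 : ℝ)..1, f x) / 2 + 1 / 12 := by
  have hreflect : ∫ x in (0 : ℝ)..1, x * f x = ∫ x in (0 : ℝ)..1, (1 - x) * f (1 - x) := by
    simpa using
      (intervalIntegral.integral_comp_sub_left (a := 0) (b := 1) (fun x => x * f x) 1).symm
  have hsym' : ∫ x in (0 : ℝ)..1, (1 - x) * f (1 - x)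
      = ∫ x in (0 : ℝ)..1, (f x - x * f x + (2 * x ^ 2 - 3 * x + 1)) := by
    refine intervalIntegral.integral_congr fun x hx => ?_
    rw [uIcc_of_le zero_le_one] at hx
    rw [hsym x hx]
    ring
  have hxf : IntervalIntegrable (fun x => x * f x) volume 0 1 :=
    hf.continuousOn_mul continuousOn_id
  have hpoly : ∫ x in (0 : ℝ)..1, (2 * x ^ 2 - 3 * x + 1) = 1 / 6 := by
    rw [intervalIntegral.integral_add, intervalIntegral.integral_sub,
      intervalIntegral.integral_const_mul, intervalIntegral.integral_const_mul] <;>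
      first | exact Continuous.intervalIntegrable (by fun_prop) _ _ | norm_num
  rw [intervalIntegral.integral_add (hf.sub hxf)
      (Continuous.intervalIntegrable (by fun_prop) _ _),
    intervalIntegral.integral_sub hf hxf, hpoly] at hsym'
  linarith

theorem integral_identities_delta_inverse (δ δ' δinv : ℝ → ℝ)
    (hδ : SmoothSymDiagonal δ δ') (hδinv : InverseOnUnitInterval δ δinv)
    (α : ℝ → ℝ) (hα : ∀ u : ℝ, α u = ∫ t in (0:ℝ)..u, δ t) :
    (∫ u in (0:ℝ)..1, δinv u) = 1 - α 1 ∧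
    (∫ u in (0:ℝ)..1, (δinv u) ^ 2) = 5/6 - α 1 := by
  obtain ⟨hcont, hmono, -, h0, h1, -, hsym, hderiv, hderiv_cont, -⟩ := hδ
  obtain ⟨-, -, hinv⟩ := hδinv
  have hδ' : IntervalIntegrable δ' volume 0 1 := hderiv_cont.intervalIntegrable_of_Icc zero_le_one
  have hxδ := integral_id_mul_eq_of_symm (hcont.intervalIntegrable_of_Icc zero_le_one) hsym
  constructor
  · have h := integral_comp_leftInvOn_eq_sub_integral zero_le_one hmono.monotoneOn hderiv hδ'
      (fun x _ => hasDerivWithinAt_id x _) intervalIntegrable_const hinv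
    simp only [h0, h1, id, one_mul, mul_one, mul_zero, sub_zero] at h
    rw [h, hα]
  · have h := integral_comp_leftInvOn_eq_sub_integral zero_le_one hmono.monotoneOn hderiv hδ'
      (φ' := fun x => 2 * x) (fun x _ => by simpa using (hasDerivAt_pow 2 x).hasDerivWithinAt)
      (Continuous.intervalIntegrable (by fun_prop) _ _) hinv
    simp only [h0, h1, mul_assoc, intervalIntegral.integral_const_mul] at h
    rw [h, hxδ, hα]
    ring
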